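/- arXiv:2002.11361 — 5 statements merged into one kernel-verified Lean document; each statement's English description precedes it below -/
import Mathlib

section
/- Let P be a probability distribution on ℝ^d × {−1,1} and let Q be a ρ-shift of P. Let θ = (w, b) with ‖w‖₂ ≤ R and suppose ρR < 1. Then Err(θ, Q) ≤ (1/(1 − ρR)) · L_r(θ, P). -/
open MeasureTheory

noncomputable section

/-- `ℝ^d` with the Euclidean norm. -/
abbrev Euc (d : ℕ) : Type := EuclideanSpace ℝ (Fin d)

/-- The ramp loss: `r(m) = 1` for `m ≤ 0`, `1 - m` for `0 ≤ m ≤ 1`, `0` for `m ≥ 1`. -/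
def ramp (m : ℝ) : ℝ := max 0 (min 1 (1 - m))

/-- `sign(t) = 1` if `t ≥ 0`, `-1` otherwise. -/
def sgn (t : ℝ) : ℝ := if 0 ≤ t then 1 else -1

/-- The linear model `M_θ(x) = ⟨w, x⟩ + b` for `θ = (w, b)`. -/
def model {d : ℕ} (θ : Euc d × ℝ) (x : Euc d) : ℝ := (inner ℝ θ.1 x : ℝ) + θ.2

/-- Ramp loss of a linear model on a distribution over `ℝ^d × {-1,1}`. -/
def lossR {d : ℕ} (θ : Euc d × ℝ) (P : Measure (Euc d × ℝ)) : ℝ :=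
  ∫ p, ramp (p.2 * model θ p.1) ∂P

/-- 0-1 error of a linear model on a distribution over `ℝ^d × {-1,1}`. -/
def errP {d : ℕ} (θ : Euc d × ℝ) (P : Measure (Euc d × ℝ)) : ℝ :=
  (P {p | sgn (model θ p.1) ≠ p.2}).toReal

/-- Pseudolabeled ramp loss of `θ'` on the `X`-marginal of `Q`, with pseudolabels from `θ`. -/
def pseudoLossR {d : ℕ} (θ θ' : Euc d × ℝ) (Q : Measure (Euc d × ℝ)) : ℝ :=
  ∫ x, ramp (sgn (model θ x) * model θ' x) ∂(Q.map Prod.fst)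

/-- `Q` is a `ρ`-shift of `P`: there are measurable maps `f₋₁, f₁`, each moving every point by
at most `ρ`, such that `Q` is the law of `(f_Y(X), Y)` for `(X, Y) ∼ P`. -/
def IsShift {d : ℕ} (P Q : Measure (Euc d × ℝ)) (ρ : ℝ) : Prop :=
  ∃ fneg fpos : Euc d → Euc d, Measurable fneg ∧ Measurable fpos ∧
    (∀ x, ‖fneg x - x‖ ≤ ρ) ∧ (∀ x, ‖fpos x - x‖ ≤ ρ) ∧
    Q = P.map (fun p => (if p.2 = 1 then fpos p.1 else fneg p.1, p.2))

/-- If `Q` is a `ρ`-shift of `P` and `‖w‖ ≤ R` with `ρR < 1`, then the 0-1 error of `θ` on `Q`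
is at most `(1/(1-ρR))` times the ramp loss of `θ` on `P`. -/
theorem stmt2 {d : ℕ} (P Q : Measure (Euc d × ℝ)) [IsProbabilityMeasure P]
    (hlab : P {p | p.2 = 1 ∨ p.2 = -1} = 1)
    (ρ R : ℝ) (hρ : 0 ≤ ρ) (hshift : IsShift P Q ρ)
    (θ : Euc d × ℝ) (hθ : ‖θ.1‖ ≤ R) (hρR : ρ * R < 1) :
    errP θ Q ≤ (1 / (1 - ρ * R)) * lossR θ P := by
  obtain ⟨fneg, fpos, hmn, hmp, hbn, hbp, hQ⟩ := hshift
  have hR0 : 0 ≤ R := le_trans (norm_nonneg _) hθ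
  have hρR0 : 0 ≤ ρ * R := mul_nonneg hρ hR0
  have hpos : (0:ℝ) < 1 - ρ * R := by linarith
  set f : Euc d × ℝ → Euc d := fun p => if p.2 = 1 then fpos p.1 else fneg p.1 with hf
  set g : Euc d × ℝ → Euc d × ℝ := fun p => (f p, p.2) with hg
  have hsetlab : MeasurableSet {p : Euc d × ℝ | p.2 = 1} :=
    measurable_snd (measurableSet_singleton (1:ℝ))
  have hmf : Measurable f :=
    Measurable.ite hsetlab (hmp.comp measurable_fst) (hmn.comp measurable_fst)
  have hmg : Measurable g := hmf.prodMk measurable_snd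
  have hcontM : Continuous (model θ) := by
    unfold model
    exact (continuous_const.inner continuous_id).add continuous_const
  have hsgn : Measurable sgn := by
    unfold sgn
    exact Measurable.ite (measurableSet_le measurable_const measurable_id)
      measurable_const measurable_const
  have hS : MeasurableSet {p : Euc d × ℝ | sgn (model θ p.1) ≠ p.2} := by
    have : MeasurableSet {p : Euc d × ℝ | sgn (model θ p.1) = p.2} :=
      measurableSet_eq_fun (hsgn.comp (hcontM.measurable.comp measurable_fst)) measurable_snd
    exact this.compl
  -- rewrite errP via pushforward
  have herr : errP θ Q = (P (g ⁻¹' {p : Euc d × ℝ | sgn (model θ p.1) ≠ p.2})).toReal := by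
    rw [errP, hQ, Measure.map_apply hmg hS]
  set L : Set (Euc d × ℝ) := {p | p.2 = 1 ∨ p.2 = -1} with hL
  have hLc : P Lᶜ = 0 := by
    have := measure_compl (s := L) ?_ (measure_ne_top P L)
    · rw [this, hlab, measure_univ, tsub_self]
    · have h1 : MeasurableSet {p : Euc d × ℝ | p.2 = -1} :=
        measurable_snd (measurableSet_singleton (-1:ℝ))
      exact hsetlab.union h1
  set B : Set (Euc d × ℝ) := g ⁻¹' {p : Euc d × ℝ | sgn (model θ p.1) ≠ p.2} ∩ L with hB
  have hBmeas : MeasurableSet B := (hS.preimage hmg).inter (hsetlab.union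
    (measurable_snd (measurableSet_singleton (-1:ℝ))))
  have hPB : P (g ⁻¹' {p : Euc d × ℝ | sgn (model θ p.1) ≠ p.2}) = P B :=
    (measure_inter_conull hLc).symm
  -- key pointwise bound on B
  have hramp_nonneg : ∀ m : ℝ, 0 ≤ ramp m := fun m => le_max_left _ _
  have hramp_le_one : ∀ m : ℝ, ramp m ≤ 1 := fun m => max_le (by norm_num) (min_le_left _ _)
  have hinner : ∀ x x' : Euc d, ‖x' - x‖ ≤ ρ → model θ x - model θ x' ≤ ρ * R := by
    intro x x' hd
    have h1 : model θ x - model θ x' = (inner ℝ θ.1 (x - x') : ℝ) := by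
      unfold model; rw [inner_sub_right]; ring
    rw [h1]
    calc (inner ℝ θ.1 (x - x') : ℝ) ≤ ‖θ.1‖ * ‖x - x'‖ := real_inner_le_norm _ _
      _ ≤ R * ρ := by
          have : ‖x - x'‖ ≤ ρ := by rwa [← norm_neg, neg_sub]
          exact mul_le_mul hθ this (norm_nonneg _) hR0
      _ = ρ * R := mul_comm _ _
  have hkey : ∀ p ∈ B, 1 - ρ * R ≤ ramp (p.2 * model θ p.1) := by
    rintro ⟨x, y⟩ ⟨hp1, hp2⟩
    dsimp only at hp1 hp2 ⊢
    have hm : y * model θ x ≤ ρ * R := by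
      rcases hp2 with hy | hy
      · -- y = 1
        subst hy
        simp only [Set.mem_preimage, Set.mem_setOf_eq, hg, hf, if_true] at hp1
        have hneg : model θ (fpos x) < 0 := by
          by_contra h
          push_neg at h
          exact hp1 (by simp [sgn, h])
        have := hinner x (fpos x) (hbp x)
        linarith
      · -- y = -1
        subst hy
        have hy1 : (-1 : ℝ) ≠ 1 := by norm_num
        simp only [Set.mem_preimage, Set.mem_setOf_eq, hg, hf, hy1, if_false] at hp1
        have hnn : 0 ≤ model θ (fneg x) := by
          by_contra h
          push_neg at h
          exact hp1 (by simp [sgn, not_le.mpr h])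
        have := hinner (fneg x) x (by rw [norm_sub_rev]; exact hbn x)
        nlinarith
    unfold ramp
    refine le_trans (le_min (by linarith) (by linarith)) (le_max_right _ _)
  -- integrability
  have hcontI : Continuous (fun p : Euc d × ℝ => ramp (p.2 * model θ p.1)) := by
    have h1 : Continuous (fun p : Euc d × ℝ => p.2 * model θ p.1) :=
      continuous_snd.mul (hcontM.comp continuous_fst)
    have h2 : Continuous ramp := by
      unfold ramp
      exact continuous_const.max (continuous_const.min (continuous_const.sub continuous_id))
    exact h2.comp h1
  have hint : Integrable (fun p : Euc d × ℝ => ramp (p.2 * model θ p.1)) P := by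
    refine (integrable_const (1:ℝ)).mono' hcontI.aestronglyMeasurable ?_
    refine ae_of_all _ fun p => ?_
    rw [Real.norm_eq_abs, abs_of_nonneg (hramp_nonneg _)]
    exact hramp_le_one _
  -- integral inequalities
  have h1 : (1 - ρ * R) * (P B).toReal ≤ ∫ p in B, ramp (p.2 * model θ p.1) ∂P :=
    setIntegral_ge_of_const_le_real hBmeas (measure_ne_top P B) hkey hint.integrableOn
  have h2 : ∫ p in B, ramp (p.2 * model θ p.1) ∂P ≤ lossR θ P :=
    setIntegral_le_integral hint (ae_of_all _ fun p => hramp_nonneg _)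
  have h3 : (1 - ρ * R) * (P B).toReal ≤ lossR θ P := le_trans h1 h2
  rw [herr, hPB]
  rw [one_div, ← div_eq_inv_mul, le_div_iff₀ hpos]
  linarith
end
end

section
/- Let P be a probability distribution on ℝ^d × {−1,1}, let Q be a ρ-shift of P, let θ = (w,b) ∈ Θ_R, and suppose ρR < 1. Let β = (1/(1 − ρR)) · L_r(θ, P) and α* = inf_{θ'' ∈ Θ_R} L_r(θ'', Q). Suppose θ' ∈ Θ_R minimizes over Θ_R the pseudolabeled ramp loss on the X-marginal of Q with pseudolabels generated by θ, i.e., E_{X∼Q_X}[r(sign(M_θ(X))·M_{θ'}(X))] ≤ E_{X∼Q_X}[r(sign(M_θ(X))·M_{θ''}(X))] for all θ'' ∈ Θ_R. Then L_r(θ', Q) ≤ α* + 2β. -/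
open MeasureTheory

noncomputable section

lemma ramp_nonneg (m : ℝ) : 0 ≤ ramp m := le_max_left _ _

lemma ramp_le_one (m : ℝ) : ramp m ≤ 1 :=
  max_le (by norm_num) (min_le_left _ _)

lemma ramp_ge {m c : ℝ} (h : m ≤ c) (hc0 : 0 ≤ c) (hc1 : c ≤ 1) : 1 - c ≤ ramp m := by
  have h1 : 1 - c ≤ min 1 (1 - m) := le_min (by linarith) (by linarith)
  exact h1.trans (le_max_right _ _)

/-- Key pointwise inequality: the ramp losses with true and pseudo labels differ by at
most `(1/(1-c)) * ramp (y * mθ)` when the pseudolabeling model's values at the original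
and shifted points differ by at most `c`. -/
lemma ramp_key {c y m mθ mθ' : ℝ} (hy : y = 1 ∨ y = -1)
    (hd : |mθ' - mθ| ≤ c) (hc0 : 0 ≤ c) (hc1 : c < 1) :
    |ramp (y * m) - ramp (sgn mθ' * m)| ≤ (1 / (1 - c)) * ramp (y * mθ) := by
  by_cases h : sgn mθ' = y
  · rw [h, sub_self, abs_zero]
    have := ramp_nonneg (y * mθ)
    have : 0 < 1 - c := by linarith
    positivity
  · -- pseudolabel disagrees with the true label
    have hym : y * mθ ≤ c := by
      rcases hy with hy | hy
      · -- y = 1, so sgn mθ' = -1, i.e. mθ' < 0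
        have hneg : ¬ (0 ≤ mθ') := by
          intro h0
          exact h (by simp [sgn, h0, hy])
        push_neg at hneg
        have := abs_le.mp hd
        rw [hy, one_mul]; linarith [this.1]
      · -- y = -1, so sgn mθ' = 1, i.e. 0 ≤ mθ'
        have hpos : 0 ≤ mθ' := by
          by_contra h0
          exact h (by simp [sgn, h0, hy])
        have := abs_le.mp hd
        rw [hy]; nlinarith [this.2]
    have hr : 1 - c ≤ ramp (y * mθ) := ramp_ge hym hc0 (le_of_lt hc1)
    have h1c : 0 < 1 - c := by linarith
    have habs : |ramp (y * m) - ramp (sgn mθ' * m)| ≤ 1 := by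
      have := ramp_nonneg (y * m); have := ramp_le_one (y * m)
      have := ramp_nonneg (sgn mθ' * m); have := ramp_le_one (sgn mθ' * m)
      rw [abs_le]; constructor <;> linarith
    calc |ramp (y * m) - ramp (sgn mθ' * m)| ≤ 1 := habs
      _ = (1 / (1 - c)) * (1 - c) := by field_simp
      _ ≤ (1 / (1 - c)) * ramp (y * mθ) := by
          apply mul_le_mul_of_nonneg_left hr (by positivity)

lemma measurable_sgn : Measurable sgn :=
  Measurable.ite measurableSet_Ici measurable_const measurable_const

lemma continuous_ramp : Continuous ramp :=
  continuous_const.max ((continuous_const.min (continuous_const.sub continuous_id)))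

lemma continuous_model {d : ℕ} (θ : Euc d × ℝ) : Continuous (model θ) :=
  (continuous_const.inner continuous_id).add continuous_const

lemma integrable_of_bdd {α : Type*} [MeasurableSpace α] {μ : Measure α}
    [IsProbabilityMeasure μ] {f : α → ℝ} (hf : Measurable f) (C : ℝ)
    (hb : ∀ p, ‖f p‖ ≤ C) : Integrable f μ :=
  (integrable_const C).mono' hf.aestronglyMeasurable (Filter.Eventually.of_forall hb)

/-- One step of self-training on a `ρ`-shifted distribution: the minimizer `θ'` of the
pseudolabeled ramp loss over `Θ_R` satisfies `L_r(θ', Q) ≤ α* + 2β`. -/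
theorem stmt3 {d : ℕ} (P Q : Measure (Euc d × ℝ)) [IsProbabilityMeasure P]
    (hlab : P {p | p.2 = 1 ∨ p.2 = -1} = 1)
    (ρ R : ℝ) (hρ : 0 ≤ ρ) (hR : 0 < R) (hρR : ρ * R < 1)
    (hshift : IsShift P Q ρ)
    (θ θ' : Euc d × ℝ) (hθ : ‖θ.1‖ ≤ R) (hθ' : ‖θ'.1‖ ≤ R)
    (hmin : ∀ θ'' : Euc d × ℝ, ‖θ''.1‖ ≤ R → pseudoLossR θ θ' Q ≤ pseudoLossR θ θ'' Q) :
    lossR θ' Q ≤ sInf {a : ℝ | ∃ θ'' : Euc d × ℝ, ‖θ''.1‖ ≤ R ∧ a = lossR θ'' Q}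
      + 2 * ((1 / (1 - ρ * R)) * lossR θ P) := by
  obtain ⟨fneg, fpos, hmneg, hmpos, hbneg, hbpos, hQ⟩ := hshift
  set G : Euc d × ℝ → Euc d := fun p => if p.2 = 1 then fpos p.1 else fneg p.1 with hG
  have hmG : Measurable G :=
    Measurable.ite (measurable_snd (measurableSet_singleton 1))
      (hmpos.comp measurable_fst) (hmneg.comp measurable_fst)
  have hF : Measurable (fun p : Euc d × ℝ => (G p, p.2)) := hmG.prodMk measurable_snd
  have hQmap : Q = P.map (fun p => (G p, p.2)) := hQ
  have hρR0 : 0 ≤ ρ * R := mul_nonneg hρ hR.le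
  have hpos : (0:ℝ) < 1 - ρ * R := by linarith
  -- measurability of the various integrands
  have hm1 : ∀ θ'' : Euc d × ℝ, Measurable (fun q : Euc d × ℝ => ramp (q.2 * model θ'' q.1)) :=
    fun θ'' => continuous_ramp.measurable.comp
      (measurable_snd.mul ((continuous_model θ'').measurable.comp measurable_fst))
  have hm2 : ∀ θ'' : Euc d × ℝ,
      Measurable (fun x : Euc d => ramp (sgn (model θ x) * model θ'' x)) :=
    fun θ'' => continuous_ramp.measurable.comp
      ((measurable_sgn.comp (continuous_model θ).measurable).mul (continuous_model θ'').measurable)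
  -- rewrite the losses on Q as integrals over P
  have hlossQ : ∀ θ'' : Euc d × ℝ, lossR θ'' Q = ∫ p, ramp (p.2 * model θ'' (G p)) ∂P := by
    intro θ''
    rw [lossR, hQmap, integral_map hF.aemeasurable (hm1 θ'').aestronglyMeasurable]
  have hmapfst : Q.map Prod.fst = P.map G := by
    rw [hQmap, Measure.map_map measurable_fst hF]
    rfl
  have hpseudo : ∀ θ'' : Euc d × ℝ,
      pseudoLossR θ θ'' Q = ∫ p, ramp (sgn (model θ (G p)) * model θ'' (G p)) ∂P := by
    intro θ''
    rw [pseudoLossR, hmapfst, integral_map hmG.aemeasurable (hm2 θ'').aestronglyMeasurable]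
  -- almost every point has a valid label
  have hae : ∀ᵐ p ∂P, p.2 = 1 ∨ p.2 = -1 := by
    have hmeas : MeasurableSet {p : Euc d × ℝ | p.2 = 1 ∨ p.2 = -1} :=
      (measurable_snd (measurableSet_singleton 1)).union
        (measurable_snd (measurableSet_singleton (-1)))
    have h0 : P {p : Euc d × ℝ | p.2 = 1 ∨ p.2 = -1}ᶜ = 0 := by
      rw [measure_compl hmeas (measure_ne_top P _), measure_univ, hlab, tsub_self]
    rw [ae_iff]
    convert h0 using 2
    rfl
  -- the model θ moves by at most ρ * R under the shift
  have hd : ∀ p : Euc d × ℝ, |model θ (G p) - model θ p.1| ≤ ρ * R := by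
    intro p
    have h1 : model θ (G p) - model θ p.1 = (inner ℝ θ.1 (G p - p.1) : ℝ) := by
      simp only [model, inner_sub_right]; ring
    have h2 : ‖G p - p.1‖ ≤ ρ := by
      by_cases h : p.2 = 1 <;> simp [hG, h, hbpos, hbneg]
    rw [h1]
    calc |(inner ℝ θ.1 (G p - p.1) : ℝ)| ≤ ‖θ.1‖ * ‖G p - p.1‖ := abs_real_inner_le_norm _ _
      _ ≤ R * ρ := mul_le_mul hθ h2 (norm_nonneg _) hR.le
      _ = ρ * R := mul_comm _ _
  -- the central bound: true and pseudolabeled losses differ by at most β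
  have hβ : ∀ θ'' : Euc d × ℝ,
      |lossR θ'' Q - pseudoLossR θ θ'' Q| ≤ (1 / (1 - ρ * R)) * lossR θ P := by
    intro θ''
    set f : Euc d × ℝ → ℝ := fun p => ramp (p.2 * model θ'' (G p)) with hf
    set g : Euc d × ℝ → ℝ := fun p => ramp (sgn (model θ (G p)) * model θ'' (G p)) with hg
    set h : Euc d × ℝ → ℝ := fun p => (1 / (1 - ρ * R)) * ramp (p.2 * model θ p.1) with hh
    have hfm : Measurable f := continuous_ramp.measurable.comp
      (measurable_snd.mul ((continuous_model θ'').measurable.comp hmG))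
    have hgm : Measurable g := continuous_ramp.measurable.comp
      (((measurable_sgn.comp ((continuous_model θ).measurable.comp hmG)).mul
        ((continuous_model θ'').measurable.comp hmG)))
    have hhm : Measurable h :=
      ((hm1 θ).const_mul _)
    have hfint : Integrable f P := integrable_of_bdd hfm 1 (fun p => by
      rw [Real.norm_eq_abs, abs_of_nonneg (ramp_nonneg _)]; exact ramp_le_one _)
    have hgint : Integrable g P := integrable_of_bdd hgm 1 (fun p => by
      rw [Real.norm_eq_abs, abs_of_nonneg (ramp_nonneg _)]; exact ramp_le_one _)
    have hhint : Integrable h P := integrable_of_bdd hhm (1 / (1 - ρ * R)) (fun p => by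
      rw [Real.norm_eq_abs, abs_of_nonneg (mul_nonneg (by positivity) (ramp_nonneg _) : (0:ℝ) ≤ h p)]
      have := ramp_le_one (p.2 * model θ p.1)
      have h1 : (0:ℝ) ≤ 1 / (1 - ρ * R) := by positivity
      calc h p ≤ (1 / (1 - ρ * R)) * 1 := mul_le_mul_of_nonneg_left this h1
        _ = 1 / (1 - ρ * R) := mul_one _)
    have haeb : ∀ᵐ p ∂P, |f p - g p| ≤ h p := by
      filter_upwards [hae] with p hp
      exact ramp_key hp (hd p) hρR0 hρR
    have hint : ∫ p, h p ∂P = (1 / (1 - ρ * R)) * lossR θ P := by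
      rw [hh, lossR, integral_const_mul]
    rw [hlossQ, hpseudo, ← integral_sub hfint hgint, ← hint]
    have step1 : |∫ p, (f p - g p) ∂P| ≤ ∫ p, |f p - g p| ∂P := by
      simpa [Real.norm_eq_abs] using
        norm_integral_le_integral_norm (μ := P) (fun p => f p - g p)
    have step2 : ∫ p, |f p - g p| ∂P ≤ ∫ p, h p ∂P :=
      integral_mono_ae (hfint.sub hgint).abs hhint haeb
    exact step1.trans step2
  -- combine: one-sided comparison against any competitor
  set β := (1 / (1 - ρ * R)) * lossR θ P with hβdef
  have key : ∀ θ'' : Euc d × ℝ, ‖θ''.1‖ ≤ R → lossR θ' Q ≤ lossR θ'' Q + 2 * β := by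
    intro θ'' h''
    have h1 := abs_le.mp (hβ θ')
    have h2 := abs_le.mp (hβ θ'')
    have h3 := hmin θ'' h''
    linarith [h1.2, h2.1]
  have hne : {a : ℝ | ∃ θ'' : Euc d × ℝ, ‖θ''.1‖ ≤ R ∧ a = lossR θ'' Q}.Nonempty :=
    ⟨lossR θ Q, θ, hθ, rfl⟩
  have hlb : lossR θ' Q - 2 * β ≤
      sInf {a : ℝ | ∃ θ'' : Euc d × ℝ, ‖θ''.1‖ ≤ R ∧ a = lossR θ'' Q} := by
    apply le_csInf hne
    rintro a ⟨θ'', h'', rfl⟩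
    linarith [key θ'' h'']
  linarith
end
end

section
/- Let P be a probability distribution on ℝ^d × {−1,1} and let f_0, f_1, …, f_T : ℝ^d → ℝ be measurable functions such that E_{(X,Y)∼P}[r(Y·f_0(X))] ≤ α_0 and, for every 1 ≤ t ≤ T, E_{X∼P_X}[r(sign(f_{t−1}(X))·f_t(X))] ≤ E_{X∼P_X}[r(|f_{t−1}(X)|)] (i.e., f_t does at least as well on the pseudolabels of f_{t−1} as f_{t−1} itself, which holds whenever f_t minimizes the pseudolabeled ramp loss over a class containing f_{t−1}). Then E_{(X,Y)∼P}[r(Y·f_T(X))] ≤ α_0·(T + 1). -/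
open MeasureTheory

noncomputable section

lemma ramp_anti {a b : ℝ} (h : a ≤ b) : ramp b ≤ ramp a :=
  max_le_max le_rfl (min_le_min le_rfl (by linarith))

lemma ramp_of_nonpos {m : ℝ} (h : m ≤ 0) : ramp m = 1 := by
  unfold ramp
  rw [min_eq_left (by linarith), max_eq_right zero_le_one]

lemma measurable_ramp : Measurable ramp :=
  (continuous_const.max (continuous_const.min
    (continuous_const.sub continuous_id))).measurable

lemma key_ineq (a b y : ℝ) (hy : y = 1 ∨ y = -1) :
    ramp (y * b) ≤ ramp (sgn a * b) + ramp (y * a) := by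
  unfold sgn
  rcases hy with rfl | rfl <;> by_cases h : 0 ≤ a
  · rw [if_pos h]; linarith [ramp_nonneg (1 * a)]
  · rw [if_neg h, ramp_of_nonpos (show (1:ℝ) * a ≤ 0 by push_neg at h; linarith)]
    linarith [ramp_le_one (1 * b), ramp_nonneg (-1 * b)]
  · rw [if_pos h, ramp_of_nonpos (show (-1:ℝ) * a ≤ 0 by linarith)]
    linarith [ramp_le_one (-1 * b), ramp_nonneg (1 * b)]
  · rw [if_neg h]; linarith [ramp_nonneg (-1 * a)]

lemma ramp_abs_le (a y : ℝ) (hy : y = 1 ∨ y = -1) : ramp |a| ≤ ramp (y * a) := by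
  apply ramp_anti
  rcases hy with rfl | rfl <;> simp [neg_le_abs, le_abs_self]

lemma ramp_abs_le_sgn (a b : ℝ) : ramp |b| ≤ ramp (sgn a * b) := by
  apply ramp_anti
  unfold sgn
  by_cases h : 0 ≤ a <;> simp [h, neg_le_abs, le_abs_self]

/-- With no distribution shift, `T` rounds of self-training increase the ramp loss by at most
`α₀` per round: the final loss is at most `α₀ (T+1)`. -/
theorem stmt7 {d : ℕ} (P : Measure (Euc d × ℝ)) [IsProbabilityMeasure P]
    (hlab : P {p | p.2 = 1 ∨ p.2 = -1} = 1)
    (T : ℕ) (f : ℕ → Euc d → ℝ) (hf : ∀ t ≤ T, Measurable (f t))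
    (α₀ : ℝ) (h0 : ∫ p, ramp (p.2 * f 0 p.1) ∂P ≤ α₀)
    (hst : ∀ t, 1 ≤ t → t ≤ T →
      ∫ x, ramp (sgn (f (t - 1) x) * f t x) ∂(P.map Prod.fst) ≤
        ∫ x, ramp |f (t - 1) x| ∂(P.map Prod.fst)) :
    ∫ p, ramp (p.2 * f T p.1) ∂P ≤ α₀ * (T + 1) := by
  -- integrability of bounded measurable functions
  have hint : ∀ g : Euc d × ℝ → ℝ, Measurable g →
      Integrable (fun p => ramp (g p)) P := by
    intro g hg
    refine (integrable_const (1 : ℝ)).mono'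
      (measurable_ramp.comp hg).aestronglyMeasurable (ae_of_all _ fun p => ?_)
    rw [Real.norm_eq_abs, abs_of_nonneg (ramp_nonneg _)]
    exact ramp_le_one _
  -- a.e. labels are ±1
  have hy : ∀ᵐ p ∂P, p.2 = 1 ∨ p.2 = -1 := by
    have hset : MeasurableSet {p : Euc d × ℝ | p.2 = 1 ∨ p.2 = -1} :=
      ((measurable_snd (measurableSet_singleton 1)).union
        (measurable_snd (measurableSet_singleton (-1))))
    rw [ae_iff]
    have : P {p : Euc d × ℝ | ¬(p.2 = 1 ∨ p.2 = -1)} = P {p : Euc d × ℝ | p.2 = 1 ∨ p.2 = -1}ᶜ := rfl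
    rw [this, measure_compl hset (measure_ne_top _ _), hlab, measure_univ, tsub_self]
  -- rewrite marginal integrals
  have hmap : ∀ g : Euc d → ℝ, Measurable g →
      (∫ x, g x ∂(P.map Prod.fst)) = ∫ p, g p.1 ∂P := fun g hg =>
    integral_map measurable_fst.aemeasurable hg.aestronglyMeasurable
  -- notation
  set L : ℕ → ℝ := fun t => ∫ p, ramp (p.2 * f t p.1) ∂P with hL
  set U : ℕ → ℝ := fun t => ∫ p, ramp |f t p.1| ∂P with hU
  -- U t ≤ α₀ for all t ≤ T
  have hU0 : ∀ t ≤ T, U t ≤ α₀ := by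
    intro t ht
    induction t with
    | zero =>
      calc U 0 ≤ L 0 := by
            apply integral_mono_ae
              (hint _ ((hf 0 (Nat.zero_le _)).comp measurable_fst).abs)
              (hint _ (measurable_snd.mul ((hf 0 (Nat.zero_le _)).comp measurable_fst)))
            filter_upwards [hy] with p hp
            exact ramp_abs_le _ _ hp
        _ ≤ α₀ := h0
    | succ n ih =>
      have hn : n ≤ T := Nat.le_of_succ_le ht
      have h1 : U (n + 1) ≤ ∫ x, ramp (sgn (f n x) * f (n+1) x) ∂(P.map Prod.fst) := by
        have h4 := hmap (fun x => ramp (sgn (f n x) * f (n+1) x))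
          (by exact measurable_ramp.comp ((measurable_sgn.comp (hf n hn)).mul (hf (n+1) ht)))
        rw [h4]
        apply integral_mono
          (hint _ ((hf (n+1) ht).comp measurable_fst).abs)
          (hint _ (((measurable_sgn.comp (hf n hn)).mul (hf (n+1) ht)).comp measurable_fst))
        intro p
        exact ramp_abs_le_sgn _ _
      have h2 := hst (n + 1) (Nat.le_add_left 1 n) ht
      simp only [Nat.add_sub_cancel] at h2
      have h3 : (∫ x, ramp |f n x| ∂(P.map Prod.fst)) = U n :=
        hmap (fun x => ramp |f n x|) (by exact measurable_ramp.comp (hf n hn).abs)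
      linarith [ih hn]
  -- main induction on L
  have hLmain : ∀ t ≤ T, L t ≤ α₀ * (t + 1) := by
    intro t ht
    induction t with
    | zero => simpa using h0
    | succ n ih =>
      have hn : n ≤ T := Nat.le_of_succ_le ht
      have hstep : L (n + 1) ≤
          (∫ x, ramp (sgn (f n x) * f (n+1) x) ∂(P.map Prod.fst)) + L n := by
        have h4 := hmap (fun x => ramp (sgn (f n x) * f (n+1) x))
          (by exact measurable_ramp.comp ((measurable_sgn.comp (hf n hn)).mul (hf (n+1) ht)))
        rw [h4]
        have i1 : Integrable (fun p : Euc d × ℝ => ramp (sgn (f n p.1) * f (n+1) p.1)) P :=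
          hint (fun p => sgn (f n p.1) * f (n+1) p.1)
            (by exact ((measurable_sgn.comp (hf n hn)).comp measurable_fst).mul ((hf (n+1) ht).comp measurable_fst))
        have i2 : Integrable (fun p : Euc d × ℝ => ramp (p.2 * f n p.1)) P :=
          hint (fun p => p.2 * f n p.1)
            (by exact measurable_snd.mul ((hf n hn).comp measurable_fst))
        rw [show (∫ p, (fun x => ramp (sgn (f n x) * f (n+1) x)) p.1 ∂P) + L n =
            ∫ p, (ramp (sgn (f n p.1) * f (n+1) p.1) + ramp (p.2 * f n p.1)) ∂P from
          (integral_add i1 i2).symm]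
        apply integral_mono_ae
          (hint (fun p => p.2 * f (n+1) p.1)
            (by exact measurable_snd.mul ((hf (n+1) ht).comp measurable_fst)))
          (i1.add i2)
        filter_upwards [hy] with p hp
        exact key_ineq _ _ _ hp
      have h2 := hst (n + 1) (Nat.le_add_left 1 n) ht
      simp only [Nat.add_sub_cancel] at h2
      have h3 : (∫ x, ramp |f n x| ∂(P.map Prod.fst)) = U n :=
        hmap (fun x => ramp |f n x|) (by exact measurable_ramp.comp (hf n hn).abs)
      have := hU0 n hn
      have := ih hn
      push_cast
      push_cast at this
      linarith
  simpa using hLmain T le_rfl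
end
end

section
/- For every probability distribution P on ℝ^d × {−1,1} and all measurable f, f' : ℝ^d → ℝ: E_{(X,Y)∼P}[r(Y·f'(X))] ≤ E_{X∼P_X}[r(sign(f(X))·f'(X))] + E_{(X,Y)∼P}[r(Y·f(X))]. Moreover, pointwise, for all a, b ∈ ℝ and y ∈ {−1,1}: r(y·a) ≤ max(r(sign(b)·a), r(y·b)). -/
open MeasureTheory

noncomputable section

/-- Triangle inequality for the ramp loss: the labeled loss of `f'` is at most its pseudolabeled
loss (with pseudolabels from `f`) plus the labeled loss of `f`; and the pointwise version. -/
theorem stmt10 {d : ℕ} (P : Measure (Euc d × ℝ)) [IsProbabilityMeasure P]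
    (hlab : P {p | p.2 = 1 ∨ p.2 = -1} = 1)
    (f f' : Euc d → ℝ) (hf : Measurable f) (hf' : Measurable f') :
    (∫ p, ramp (p.2 * f' p.1) ∂P ≤
      (∫ x, ramp (sgn (f x) * f' x) ∂(P.map Prod.fst)) + ∫ p, ramp (p.2 * f p.1) ∂P) ∧
    (∀ a b y : ℝ, y = 1 ∨ y = -1 → ramp (y * a) ≤ max (ramp (sgn b * a)) (ramp (y * b))) := by
  have hpt : ∀ a b y : ℝ, y = 1 ∨ y = -1 →
      ramp (y * a) ≤ max (ramp (sgn b * a)) (ramp (y * b)) := by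
    intro a b y hy
    unfold sgn
    rcases hy with rfl | rfl <;> by_cases hb : 0 ≤ b
    · simp only [if_pos hb]; exact le_max_left _ _
    · refine le_max_of_le_right ?_
      rw [show ramp (1 * b) = 1 from by rw [one_mul]; exact ramp_of_nonpos (le_of_not_ge hb)]
      exact ramp_le_one _
    · refine le_max_of_le_right ?_
      rw [show ramp (-1 * b) = 1 from ramp_of_nonpos (by nlinarith)]
      exact ramp_le_one _
    · simp only [if_neg hb]; exact le_max_left _ _
  refine ⟨?_, hpt⟩
  have hm1 : Measurable (fun p : Euc d × ℝ => ramp (p.2 * f' p.1)) :=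
    continuous_ramp.measurable.comp (measurable_snd.mul (hf'.comp measurable_fst))
  have hm2 : Measurable (fun p : Euc d × ℝ => ramp (sgn (f p.1) * f' p.1)) :=
    continuous_ramp.measurable.comp
      ((measurable_sgn.comp (hf.comp measurable_fst)).mul (hf'.comp measurable_fst))
  have hm3 : Measurable (fun p : Euc d × ℝ => ramp (p.2 * f p.1)) :=
    continuous_ramp.measurable.comp (measurable_snd.mul (hf.comp measurable_fst))
  have hnorm : ∀ m : ℝ, ‖ramp m‖ ≤ 1 := fun m => by
    rw [Real.norm_eq_abs, abs_of_nonneg (ramp_nonneg m)]; exact ramp_le_one m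
  have hint : ∀ g : Euc d × ℝ → ℝ, Measurable g → (∀ p, ‖g p‖ ≤ 1) → Integrable g P := by
    intro g hg hbd
    exact (integrable_const (1:ℝ)).mono' hg.aestronglyMeasurable (Filter.Eventually.of_forall hbd)
  have h1 := hint _ hm1 (fun p => hnorm _)
  have h2 := hint _ hm2 (fun p => hnorm _)
  have h3 := hint _ hm3 (fun p => hnorm _)
  have hmap : ∫ x, ramp (sgn (f x) * f' x) ∂(P.map Prod.fst)
      = ∫ p, ramp (sgn (f p.1) * f' p.1) ∂P := by
    rw [integral_map measurable_fst.aemeasurable]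
    exact (continuous_ramp.measurable.comp
      ((measurable_sgn.comp hf).mul hf')).aestronglyMeasurable
  rw [hmap, ← integral_add h2 h3]
  refine integral_mono_ae h1 (h2.add h3) ?_
  have hset : MeasurableSet {p : Euc d × ℝ | p.2 = 1 ∨ p.2 = -1} :=
    (measurable_snd (measurableSet_singleton 1)).union
      (measurable_snd (measurableSet_singleton (-1)))
  have hae : ∀ᵐ p ∂P, p.2 = 1 ∨ p.2 = -1 := by
    rw [ae_iff]
    have heq : {p : Euc d × ℝ | ¬(p.2 = 1 ∨ p.2 = -1)}
        = {p : Euc d × ℝ | p.2 = 1 ∨ p.2 = -1}ᶜ := rfl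
    rw [heq, measure_compl hset (measure_ne_top _ _), hlab, measure_univ, tsub_self]
  filter_upwards [hae] with p hp
  calc ramp (p.2 * f' p.1) ≤ max (ramp (sgn (f p.1) * f' p.1)) (ramp (p.2 * f p.1)) :=
        hpt _ _ _ hp
    _ ≤ ramp (sgn (f p.1) * f' p.1) + ramp (p.2 * f p.1) :=
        max_le_add_of_nonneg (ramp_nonneg _) (ramp_nonneg _)
end
end

section
/- For every α > 0 there exist probability distributions P_0, P_1, P_2 on ℝ² × {−1,1}, each supported on at most four points, such that: (i) P_1 is a (2/3)-shift of P_0 and P_2 is a (2/3)-shift of P_1; (ii) the model θ_0 = ((1,0), 0) ∈ Θ_1 has hinge loss L_h(θ_0, P_0) ≤ α; (iii) there exist θ_1 ∈ Θ_1 minimizing over Θ_1 the population pseudolabeled hinge loss on the X-marginal of P_1 with pseudolabels from θ_0, and θ_2 ∈ Θ_1 minimizing over Θ_1 the population pseudolabeled hinge loss on the X-marginal of P_2 with pseudolabels from θ_1, such that Err(θ_2, P_2) = 1 (hence L_h(θ_2, P_2) ≥ 1); (iv) there exists θ* ∈ Θ_1 with L_h(θ*, P_i) = 0 for i = 0, 1,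 2. -/
open MeasureTheory

noncomputable section

/-- The hinge loss `h(m) = max(0, 1 - m)`. -/
def hinge (m : ℝ) : ℝ := max 0 (1 - m)

/-- Hinge loss of a linear model on a distribution over `ℝ^d × {-1,1}`. -/
def lossH {d : ℕ} (θ : Euc d × ℝ) (P : Measure (Euc d × ℝ)) : ℝ :=
  ∫ p, hinge (p.2 * model θ p.1) ∂P

/-- Pseudolabeled hinge loss of `θ'` on the `X`-marginal of `Q`, with pseudolabels from `θ`. -/
def pseudoLossH {d : ℕ} (θ θ' : Euc d × ℝ) (Q : Measure (Euc d × ℝ)) : ℝ :=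
  ∫ x, hinge (sgn (model θ x) * model θ' x) ∂(Q.map Prod.fst)

/-- The point `(a, b) ∈ ℝ²` as an element of Euclidean space. -/
def pt (a b : ℝ) : Euc 2 := (WithLp.equiv 2 (Fin 2 → ℝ)).symm ![a, b]

section AuxSec
namespace Aux
open MeasureTheory

variable {X : Type*} [MeasurableSpace X] [MeasurableSingletonClass X]

/-- A weighted sum of three Dirac measures. -/
def tm (x y z : X) (p q r : ℝ) : Measure X :=
  ENNReal.ofReal p • Measure.dirac x + ENNReal.ofReal q • Measure.dirac y
    + ENNReal.ofReal r • Measure.dirac z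

lemma integrable_dirac {f : X → ℝ} {a : X} : Integrable f (Measure.dirac a) := by
  have h : f =ᵐ[Measure.dirac a] (fun _ => f a) := by
    rw [Filter.EventuallyEq, ae_dirac_eq]; exact Filter.eventually_pure.2 rfl
  exact (integrable_const (f a)).congr h.symm

lemma tm_integral (x y z : X) {p q r : ℝ} (hp : 0 ≤ p) (hq : 0 ≤ q) (hr : 0 ≤ r)
    (f : X → ℝ) : ∫ a, f a ∂(tm x y z p q r) = p * f x + q * f y + r * f z := by
  have h1 : Integrable f (ENNReal.ofReal p • Measure.dirac x) :=
    integrable_dirac.smul_measure ENNReal.ofReal_ne_top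
  have h2 : Integrable f (ENNReal.ofReal q • Measure.dirac y) :=
    integrable_dirac.smul_measure ENNReal.ofReal_ne_top
  have h3 : Integrable f (ENNReal.ofReal r • Measure.dirac z) :=
    integrable_dirac.smul_measure ENNReal.ofReal_ne_top
  rw [tm, integral_add_measure (h1.add_measure h2) h3, integral_add_measure h1 h2]
  simp [integral_smul_measure, ENNReal.toReal_ofReal, hp, hq, hr, smul_eq_mul]

omit [MeasurableSingletonClass X] in
lemma tm_map {Y : Type*} [MeasurableSpace Y] (x y z : X) (p q r : ℝ)
    {g : X → Y} (hg : Measurable g) :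
    (tm x y z p q r).map g = tm (g x) (g y) (g z) p q r := by
  simp [tm, Measure.map_add, Measure.map_smul, Measure.map_dirac' hg, hg]

omit [MeasurableSingletonClass X] in
lemma tm_apply (x y z : X) (p q r : ℝ) (s : Set X) :
    tm x y z p q r s = ENNReal.ofReal p • Measure.dirac x s
      + ENNReal.ofReal q • Measure.dirac y s + ENNReal.ofReal r • Measure.dirac z s := by
  simp [tm]

omit [MeasurableSingletonClass X] in
lemma tm_apply_of_mem {x y z : X} {p q r : ℝ} (hp : 0 ≤ p) (hq : 0 ≤ q) (hr : 0 ≤ r)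
    {s : Set X} (hx : x ∈ s) (hy : y ∈ s) (hz : z ∈ s) :
    tm x y z p q r s = ENNReal.ofReal (p + q + r) := by
  rw [tm_apply, Measure.dirac_apply_of_mem hx, Measure.dirac_apply_of_mem hy,
    Measure.dirac_apply_of_mem hz]
  simp [ENNReal.ofReal_add, hp, hq, hr, add_nonneg]

omit [MeasurableSingletonClass X] in
lemma tm_prob {x y z : X} {p q r : ℝ} (hp : 0 ≤ p) (hq : 0 ≤ q) (hr : 0 ≤ r)
    (hsum : p + q + r = 1) : IsProbabilityMeasure (tm x y z p q r) := by
  constructor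
  rw [tm_apply_of_mem hp hq hr (Set.mem_univ x) (Set.mem_univ y) (Set.mem_univ z), hsum]
  simp

lemma tm_compl_finset {x y z : X} {p q r : ℝ} (S : Finset X)
    (hx : x ∈ S) (hy : y ∈ S) (hz : z ∈ S) :
    tm x y z p q r (↑S)ᶜ = 0 := by
  have hs : MeasurableSet ((↑S : Set X)ᶜ) := S.finite_toSet.measurableSet.compl
  rw [tm_apply]
  rw [Measure.dirac_apply' _ hs, Measure.dirac_apply' _ hs, Measure.dirac_apply' _ hs]
  simp [Set.indicator_of_notMem, hx, hy, hz]

lemma card3 {Y : Type*} [DecidableEq Y] (a b c : Y) : ({a, b, c} : Finset Y).card ≤ 4 := by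
  have h1 : ({b, c} : Finset Y).card ≤ 2 := (Finset.card_insert_le _ _).trans (by simp)
  have h2 := Finset.card_insert_le a ({b, c} : Finset Y)
  omega

lemma inner_pt (w : Euc 2) (a b : ℝ) : (inner ℝ w (pt a b) : ℝ) = w 0 * a + w 1 * b := by
  simp [PiLp.inner_apply, Fin.sum_univ_two, pt, RCLike.inner_apply]
  ring

lemma pt_app0 (a b : ℝ) : pt a b 0 = a := rfl
lemma pt_app1 (a b : ℝ) : pt a b 1 = b := rfl

lemma model_pt (w : Euc 2) (c a b : ℝ) : model (w, c) (pt a b) = w 0 * a + w 1 * b + c := by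
  show (inner ℝ w (pt a b) : ℝ) + c = _
  rw [inner_pt]

lemma mval (u v c a b : ℝ) : model (pt u v, c) (pt a b) = u * a + v * b + c := by
  rw [model_pt]; norm_num [pt]

lemma norm_pt (a b : ℝ) : ‖pt a b‖ = Real.sqrt (a ^ 2 + b ^ 2) := by
  rw [EuclideanSpace.norm_eq]
  simp [Fin.sum_univ_two, pt, Real.norm_eq_abs, sq_abs]

lemma norm_pt_a0 (a : ℝ) : ‖pt a 0‖ = |a| := by
  rw [norm_pt]; simp [Real.sqrt_sq_eq_abs]

lemma norm_pt_0b (b : ℝ) : ‖pt 0 b‖ = |b| := by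
  rw [norm_pt]; simp [Real.sqrt_sq_eq_abs]

lemma coord_sq_le (w : Euc 2) (hw : ‖w‖ ≤ 1) : (w 0) ^ 2 + (w 1) ^ 2 ≤ 1 := by
  have h1 : ‖w‖ = Real.sqrt ((w 0) ^ 2 + (w 1) ^ 2) := by
    rw [EuclideanSpace.norm_eq]; simp [Fin.sum_univ_two, Real.norm_eq_abs, sq_abs]
  have h2 : Real.sqrt ((w 0) ^ 2 + (w 1) ^ 2) ≤ 1 := h1 ▸ hw
  have h3 : (0:ℝ) ≤ (w 0) ^ 2 + (w 1) ^ 2 := by positivity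
  nlinarith [Real.sq_sqrt h3, Real.sqrt_nonneg ((w 0) ^ 2 + (w 1) ^ 2)]

lemma pt_sub (a b c d : ℝ) : pt a b - pt c d = pt (a - c) (b - d) := by
  ext i; fin_cases i <;> simp [pt]

lemma pt_inj {a b c d : ℝ} (h : pt a b = pt c d) : a = c ∧ b = d :=
  ⟨congrArg (fun v => v 0) h, congrArg (fun v => v 1) h⟩

lemma hinge_nonneg (m : ℝ) : 0 ≤ hinge m := le_max_left _ _
lemma one_sub_le_hinge (m : ℝ) : 1 - m ≤ hinge m := le_max_right _ _
lemma hinge_of_le {m : ℝ} (h : 1 ≤ m) : hinge m = 0 := max_eq_left (by linarith)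
lemma hinge_of_ge {m : ℝ} (h : m ≤ 1) : hinge m = 1 - m := max_eq_right (by linarith)
lemma sgn_of_nonneg {t : ℝ} (h : 0 ≤ t) : sgn t = 1 := if_pos h
lemma sgn_of_neg {t : ℝ} (h : t < 0) : sgn t = -1 := if_neg (not_le.2 h)

/-- The shift map on `Euc d × ℝ` associated to a pair of label-wise maps. -/
def shmap {d : ℕ} (fneg fpos : Euc d → Euc d) : Euc d × ℝ → Euc d × ℝ :=
  fun p => (if p.2 = 1 then fpos p.1 else fneg p.1, p.2)

lemma shmap_meas {d : ℕ} {fneg fpos : Euc d → Euc d}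
    (hn : Measurable fneg) (hp : Measurable fpos) : Measurable (shmap fneg fpos) := by
  apply Measurable.prod
  · exact Measurable.ite (measurable_snd (measurableSet_singleton 1))
      (hp.comp measurable_fst) (hn.comp measurable_fst)
  · exact measurable_snd

open Classical in
/-- moving one specified point -/
noncomputable def mv1 (u v : Euc 2) : Euc 2 → Euc 2 := fun x => if x = u then v else x

lemma mv1_same (u v : Euc 2) : mv1 u v u = v := by simp [mv1]
lemma mv1_other {u x : Euc 2} (v : Euc 2) (hx : x ≠ u) : mv1 u v x = x := by simp [mv1, hx]

lemma mv1_meas (u v : Euc 2) : Measurable (mv1 u v) := by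
  unfold mv1
  exact Measurable.ite (measurableSet_eq) measurable_const measurable_id

open Classical in
/-- moving two specified points -/
noncomputable def mv2 (u v u' v' : Euc 2) : Euc 2 → Euc 2 :=
  fun x => if x = u then v else if x = u' then v' else x

lemma mv2_fst (u v u' v' : Euc 2) : mv2 u v u' v' u = v := by simp [mv2]
lemma mv2_snd {u u' : Euc 2} (v v' : Euc 2) (hx : u' ≠ u) : mv2 u v u' v' u' = v' := by
  simp [mv2, hx]
lemma mv2_other {u u' x : Euc 2} (v v' : Euc 2) (hx : x ≠ u) (hx' : x ≠ u') :
    mv2 u v u' v' x = x := by simp [mv2, hx, hx']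

lemma mv2_meas (u v u' v' : Euc 2) : Measurable (mv2 u v u' v') := by
  unfold mv2
  exact Measurable.ite (measurableSet_eq) measurable_const
    (Measurable.ite (measurableSet_eq) measurable_const measurable_id)

end Aux
end AuxSec

/-- Gradual self-training with the hinge loss can fail: for every `α > 0` there are
`(2/3)`-gradually-shifting distributions `P₀, P₁, P₂` on at most four points each, where
`θ₀ = ((1,0),0)` has hinge loss `≤ α` on `P₀`, two rounds of population hinge-loss self-training
over `Θ₁` can yield a classifier with error 1 on `P₂` (hence hinge loss `≥ 1`), even though some
`θ* ∈ Θ₁` has zero hinge loss on all three distributions. -/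
theorem stmt15 (α : ℝ) (hα : 0 < α) :
    ∃ P₀ P₁ P₂ : Measure (Euc 2 × ℝ),
      IsProbabilityMeasure P₀ ∧ IsProbabilityMeasure P₁ ∧ IsProbabilityMeasure P₂ ∧
      (∃ S₀ : Finset (Euc 2 × ℝ), S₀.card ≤ 4 ∧ P₀ (↑S₀)ᶜ = 0) ∧
      (∃ S₁ : Finset (Euc 2 × ℝ), S₁.card ≤ 4 ∧ P₁ (↑S₁)ᶜ = 0) ∧
      (∃ S₂ : Finset (Euc 2 × ℝ), S₂.card ≤ 4 ∧ P₂ (↑S₂)ᶜ = 0) ∧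
      IsShift P₀ P₁ (2 / 3) ∧ IsShift P₁ P₂ (2 / 3) ∧
      (‖(pt 1 0, (0 : ℝ)).1‖ ≤ 1 ∧ lossH (pt 1 0, (0 : ℝ)) P₀ ≤ α) ∧
      (∃ θ₁ θ₂ : Euc 2 × ℝ, ‖θ₁.1‖ ≤ 1 ∧ ‖θ₂.1‖ ≤ 1 ∧
        (∀ θ'' : Euc 2 × ℝ, ‖θ''.1‖ ≤ 1 →
          pseudoLossH (pt 1 0, (0 : ℝ)) θ₁ P₁ ≤ pseudoLossH (pt 1 0, (0 : ℝ)) θ'' P₁) ∧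
        (∀ θ'' : Euc 2 × ℝ, ‖θ''.1‖ ≤ 1 → pseudoLossH θ₁ θ₂ P₂ ≤ pseudoLossH θ₁ θ'' P₂) ∧
        errP θ₂ P₂ = 1 ∧ 1 ≤ lossH θ₂ P₂) ∧
      (∃ θstar : Euc 2 × ℝ, ‖θstar.1‖ ≤ 1 ∧
        lossH θstar P₀ = 0 ∧ lossH θstar P₁ = 0 ∧ lossH θstar P₂ = 0) := by
  classical
  -- parameters
  set l : ℝ := min α (1/2) with hl_def
  have hl0 : 0 < l := lt_min hα (by norm_num)
  have hl2 : l ≤ 1/2 := min_le_right _ _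
  have hlα : l ≤ α := min_le_left _ _
  have hql : (0:ℝ) ≤ 1/2 - l := by linarith
  set h : ℝ := (1 - l) / l with hh_def
  have hlh : l * h = 1 - l := by rw [hh_def, mul_div_assoc', mul_div_cancel_left₀ _ hl0.ne']
  have hh1 : 1 ≤ h := by rw [hh_def, le_div_iff₀ hl0]; linarith
  -- the points
  set A0 : Euc 2 := pt (-1) (-1) with hA0
  set A1 : Euc 2 := pt (-1/3) (-1) with hA1
  set A2 : Euc 2 := pt (1/3) (-1) with hA2
  set B0 : Euc 2 := pt 1 1 with hB0
  set B1 : Euc 2 := pt (1/3) 1 with hB1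
  set B2 : Euc 2 := pt (-1/3) 1 with hB2
  set T0 : Euc 2 := pt 0 (-h) with hT0
  set T2 : Euc 2 := pt (2/3) (-h) with hT2
  -- the measures
  refine ⟨Aux.tm (A0, (-1:ℝ)) (B0, (1:ℝ)) (T0, (-1:ℝ)) (1/2) (1/2 - l) l,
          Aux.tm (A1, (-1:ℝ)) (B1, (1:ℝ)) (T0, (-1:ℝ)) (1/2) (1/2 - l) l,
          Aux.tm (A2, (-1:ℝ)) (B2, (1:ℝ)) (T2, (-1:ℝ)) (1/2) (1/2 - l) l,
          ?_, ?_, ?_, ?_, ?_, ?_, ?_, ?_, ?_, ?_, ?_⟩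
  -- probability measures
  · exact Aux.tm_prob (by norm_num) hql hl0.le (by ring)
  · exact Aux.tm_prob (by norm_num) hql hl0.le (by ring)
  · exact Aux.tm_prob (by norm_num) hql hl0.le (by ring)
  -- supports
  · exact ⟨{(A0, (-1:ℝ)), (B0, (1:ℝ)), (T0, (-1:ℝ))}, Aux.card3 _ _ _,
      Aux.tm_compl_finset _ (by simp) (by simp) (by simp)⟩
  · exact ⟨{(A1, (-1:ℝ)), (B1, (1:ℝ)), (T0, (-1:ℝ))}, Aux.card3 _ _ _,
      Aux.tm_compl_finset _ (by simp) (by simp) (by simp)⟩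
  · exact ⟨{(A2, (-1:ℝ)), (B2, (1:ℝ)), (T2, (-1:ℝ))}, Aux.card3 _ _ _,
      Aux.tm_compl_finset _ (by simp) (by simp) (by simp)⟩
  -- shift 0 → 1
  · refine ⟨Aux.mv1 A0 A1, Aux.mv1 B0 B1, Aux.mv1_meas _ _, Aux.mv1_meas _ _, ?_, ?_, ?_⟩
    · intro x
      by_cases hx : x = A0
      · subst hx
        rw [Aux.mv1_same, hA1, hA0]
        norm_num [Aux.pt_sub, Aux.norm_pt_a0, abs_of_nonneg]
      · rw [Aux.mv1_other _ hx]; simp; norm_num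
    · intro x
      by_cases hx : x = B0
      · subst hx
        rw [Aux.mv1_same, hB1, hB0]
        norm_num [Aux.pt_sub, Aux.norm_pt_a0, abs_of_nonneg]
      · rw [Aux.mv1_other _ hx]; simp; norm_num
    · have hG : Measurable (Aux.shmap (Aux.mv1 A0 A1) (Aux.mv1 B0 B1)) :=
        Aux.shmap_meas (Aux.mv1_meas _ _) (Aux.mv1_meas _ _)
      have hmap := Aux.tm_map (X := Euc 2 × ℝ) (A0, (-1:ℝ)) (B0, (1:ℝ)) (T0, (-1:ℝ))
        (1/2) (1/2 - l) l hG
      have e1 : Aux.shmap (Aux.mv1 A0 A1) (Aux.mv1 B0 B1) (A0, (-1:ℝ)) = (A1, (-1:ℝ)) := by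
        rw [Aux.shmap]
        simp only
        rw [if_neg (by norm_num), Aux.mv1_same]
      have e2 : Aux.shmap (Aux.mv1 A0 A1) (Aux.mv1 B0 B1) (B0, (1:ℝ)) = (B1, (1:ℝ)) := by
        rw [Aux.shmap]
        simp only
        simp [Aux.mv1_same]
      have e3 : Aux.shmap (Aux.mv1 A0 A1) (Aux.mv1 B0 B1) (T0, (-1:ℝ)) = (T0, (-1:ℝ)) := by
        rw [Aux.shmap]
        simp only
        rw [if_neg (by norm_num), Aux.mv1_other _ ?_]
        intro hc
        have := (Aux.pt_inj (hT0 ▸ hA0 ▸ hc)).1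
        norm_num at this
      rw [show (fun p : Euc 2 × ℝ => (if p.2 = 1 then Aux.mv1 B0 B1 p.1 else Aux.mv1 A0 A1 p.1, p.2))
            = Aux.shmap (Aux.mv1 A0 A1) (Aux.mv1 B0 B1) from rfl]
      rw [hmap, e1, e2, e3]
  -- shift 1 → 2
  · refine ⟨Aux.mv2 A1 A2 T0 T2, Aux.mv1 B1 B2, Aux.mv2_meas _ _ _ _, Aux.mv1_meas _ _, ?_, ?_, ?_⟩
    · intro x
      by_cases hx : x = A1
      · subst hx
        rw [Aux.mv2_fst, hA2, hA1]
        norm_num [Aux.pt_sub, Aux.norm_pt_a0, abs_of_nonneg]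
      · by_cases hx2 : x = T0
        · subst hx2
          rw [Aux.mv2_snd _ _ hx, hT2, hT0]
          norm_num [Aux.pt_sub, Aux.norm_pt_a0, abs_of_nonneg]
        · rw [Aux.mv2_other _ _ hx hx2]; simp; norm_num
    · intro x
      by_cases hx : x = B1
      · subst hx
        rw [Aux.mv1_same, hB2, hB1]
        norm_num [Aux.pt_sub, Aux.norm_pt_a0, abs_of_nonneg]
      · rw [Aux.mv1_other _ hx]; simp; norm_num
    · have hG : Measurable (Aux.shmap (Aux.mv2 A1 A2 T0 T2) (Aux.mv1 B1 B2)) :=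
        Aux.shmap_meas (Aux.mv2_meas _ _ _ _) (Aux.mv1_meas _ _)
      have hmap := Aux.tm_map (X := Euc 2 × ℝ) (A1, (-1:ℝ)) (B1, (1:ℝ)) (T0, (-1:ℝ))
        (1/2) (1/2 - l) l hG
      have e1 : Aux.shmap (Aux.mv2 A1 A2 T0 T2) (Aux.mv1 B1 B2) (A1, (-1:ℝ)) = (A2, (-1:ℝ)) := by
        rw [Aux.shmap]
        simp only
        rw [if_neg (by norm_num), Aux.mv2_fst]
      have e2 : Aux.shmap (Aux.mv2 A1 A2 T0 T2) (Aux.mv1 B1 B2) (B1, (1:ℝ)) = (B2, (1:ℝ)) := by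
        rw [Aux.shmap]
        simp only
        simp [Aux.mv1_same]
      have e3 : Aux.shmap (Aux.mv2 A1 A2 T0 T2) (Aux.mv1 B1 B2) (T0, (-1:ℝ)) = (T2, (-1:ℝ)) := by
        rw [Aux.shmap]
        simp only
        rw [if_neg (by norm_num), Aux.mv2_snd _ _ ?_]
        intro hc
        have := (Aux.pt_inj (hT0 ▸ hA1 ▸ hc)).1
        norm_num at this
      rw [show (fun p : Euc 2 × ℝ => (if p.2 = 1 then Aux.mv1 B1 B2 p.1 else Aux.mv2 A1 A2 T0 T2 p.1, p.2))
            = Aux.shmap (Aux.mv2 A1 A2 T0 T2) (Aux.mv1 B1 B2) from rfl]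
      rw [hmap, e1, e2, e3]
  -- θ₀ has small loss on P₀
  · constructor
    · rw [Aux.norm_pt_a0]; norm_num
    · rw [lossH, Aux.tm_integral _ _ _ (by norm_num) hql hl0.le]
      simp only
      rw [hA0, hB0, hT0, Aux.mval, Aux.mval, Aux.mval]
      norm_num [hinge]
      linarith
  -- the self-training steps
  · refine ⟨(pt 1 0, -1/3), (pt 0 (-1), 0), ?_, ?_, ?_, ?_, ?_, ?_⟩
    · rw [Aux.norm_pt_a0]; norm_num
    · rw [Aux.norm_pt_0b]; norm_num
    -- round 1 minimality
    · rintro ⟨w, b⟩ hw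
      simp only at hw
      have hsq := Aux.coord_sq_le w hw
      have hw0 : w 0 ≤ 1 := by nlinarith [sq_nonneg (w 1)]
      -- compute both sides
      rw [pseudoLossH, pseudoLossH,
        Aux.tm_map (A1, (-1:ℝ)) (B1, (1:ℝ)) (T0, (-1:ℝ)) (1/2) (1/2 - l) l measurable_fst,
        Aux.tm_integral _ _ _ (by norm_num) hql hl0.le,
        Aux.tm_integral _ _ _ (by norm_num) hql hl0.le]
      simp only [hA1, hB1, hT0]
      simp only [Aux.model_pt, Aux.pt_app0, Aux.pt_app1]
      have s1 : sgn ((1:ℝ) * (-1/3) + 0 * (-1) + 0) = -1 := Aux.sgn_of_neg (by norm_num)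
      have s2 : sgn ((1:ℝ) * (1/3) + 0 * 1 + 0) = 1 := Aux.sgn_of_nonneg (by norm_num)
      have s3 : sgn ((1:ℝ) * 0 + 0 * (-h) + 0) = 1 := Aux.sgn_of_nonneg (by norm_num)
      rw [s1, s2, s3]
      -- LHS value
      have v1 : hinge ((-1:ℝ) * (1 * (-1/3) + 0 * (-1) + -1/3)) = 1/3 := by
        rw [show ((-1:ℝ) * (1 * (-1/3) + 0 * (-1) + -1/3)) = 2/3 by ring,
          Aux.hinge_of_ge (by norm_num)]
        norm_num
      have v2 : hinge ((1:ℝ) * (1 * (1/3) + 0 * 1 + -1/3)) = 1 := by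
        rw [show ((1:ℝ) * (1 * (1/3) + 0 * 1 + -1/3)) = 0 by ring,
          Aux.hinge_of_ge (by norm_num)]
        norm_num
      have v3 : hinge ((1:ℝ) * (1 * 0 + 0 * (-h) + -1/3)) = 4/3 := by
        rw [show ((1:ℝ) * (1 * 0 + 0 * (-h) + -1/3)) = -(1/3) by ring,
          Aux.hinge_of_ge (by norm_num)]
        norm_num
      rw [v1, v2, v3]
      -- RHS lower bound
      have b1 : 1/2 * (1 + (w 0 * (-1/3) + w 1 * (-1) + b)) ≤
          1/2 * hinge ((-1) * (w 0 * (-1/3) + w 1 * (-1) + b)) :=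
        mul_le_mul_of_nonneg_left
          (by have := Aux.one_sub_le_hinge ((-1) * (w 0 * (-1/3) + w 1 * (-1) + b)); linarith)
          (by norm_num)
      have b2 : (1/2 - l) * (1 - (w 0 * (1/3) + w 1 * 1 + b)) ≤
          (1/2 - l) * hinge (1 * (w 0 * (1/3) + w 1 * 1 + b)) :=
        mul_le_mul_of_nonneg_left
          (by have := Aux.one_sub_le_hinge (1 * (w 0 * (1/3) + w 1 * 1 + b)); linarith) hql
      have b3 : l * (1 - (w 0 * 0 + w 1 * (-h) + b)) ≤
          l * hinge (1 * (w 0 * 0 + w 1 * (-h) + b)) :=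
        mul_le_mul_of_nonneg_left
          (by have := Aux.one_sub_le_hinge (1 * (w 0 * 0 + w 1 * (-h) + b)); linarith) hl0.le
      have key : (1 - l) * w 0 ≤ (1 - l) * 1 :=
        mul_le_mul_of_nonneg_left hw0 (by linarith)
      have hS : 1/2 * (1 + (w 0 * (-1/3) + w 1 * (-1) + b))
            + (1/2 - l) * (1 - (w 0 * (1/3) + w 1 * 1 + b))
            + l * (1 - (w 0 * 0 + w 1 * (-h) + b))
          = 1 - (1 - l) * w 0 / 3 := by
        linear_combination (w 1) * hlh
      linarith [b1, b2, b3, key, hS]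
    -- round 2 minimality
    · rintro θ'' _
      have hz : pseudoLossH (pt 1 0, (-1/3 : ℝ)) (pt 0 (-1), (0:ℝ))
          (Aux.tm (A2, (-1:ℝ)) (B2, (1:ℝ)) (T2, (-1:ℝ)) (1/2) (1/2 - l) l) = 0 := by
        rw [pseudoLossH,
          Aux.tm_map (A2, (-1:ℝ)) (B2, (1:ℝ)) (T2, (-1:ℝ)) (1/2) (1/2 - l) l measurable_fst,
          Aux.tm_integral _ _ _ (by norm_num) hql hl0.le]
        simp only [hA2, hB2, hT2]
        rw [Aux.mval, Aux.mval, Aux.mval, Aux.mval, Aux.mval, Aux.mval]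
        have s1 : sgn ((1:ℝ) * (1/3) + 0 * (-1) + -1/3) = 1 := Aux.sgn_of_nonneg (by norm_num)
        have s2 : sgn ((1:ℝ) * (-1/3) + 0 * 1 + -1/3) = -1 := Aux.sgn_of_neg (by norm_num)
        have s3 : sgn ((1:ℝ) * (2/3) + 0 * (-h) + -1/3) = 1 := Aux.sgn_of_nonneg (by norm_num)
        rw [s1, s2, s3]
        have v1 : hinge ((1:ℝ) * (0 * (1/3) + (-1) * (-1) + 0)) = 0 :=
          Aux.hinge_of_le (by norm_num)
        have v2 : hinge ((-1:ℝ) * (0 * (-1/3) + (-1) * 1 + 0)) = 0 :=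
          Aux.hinge_of_le (by norm_num)
        have v3 : hinge ((1:ℝ) * (0 * (2/3) + (-1) * (-h) + 0)) = 0 :=
          Aux.hinge_of_le (by norm_num; linarith)
        rw [v1, v2, v3]
        ring
      rw [hz, pseudoLossH]
      exact integral_nonneg fun x => Aux.hinge_nonneg _
    -- error 1
    · rw [errP, Aux.tm_apply_of_mem (by norm_num) hql hl0.le ?_ ?_ ?_]
      · rw [show 1/2 + (1/2 - l) + l = (1:ℝ) by ring]
        simp
      · show sgn (model (pt 0 (-1), (0:ℝ)) A2) ≠ -1
        rw [hA2, Aux.mval, Aux.sgn_of_nonneg (by norm_num)]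
        norm_num
      · show sgn (model (pt 0 (-1), (0:ℝ)) B2) ≠ 1
        rw [hB2, Aux.mval, Aux.sgn_of_neg (by norm_num)]
        norm_num
      · show sgn (model (pt 0 (-1), (0:ℝ)) T2) ≠ -1
        rw [hT2, Aux.mval, Aux.sgn_of_nonneg (by norm_num; linarith)]
        norm_num
    -- hinge loss at least 1
    · rw [lossH, Aux.tm_integral _ _ _ (by norm_num) hql hl0.le]
      simp only [hA2, hB2, hT2]
      rw [Aux.mval, Aux.mval, Aux.mval]
      have v1 : hinge ((-1:ℝ) * (0 * (1/3) + (-1) * (-1) + 0)) = 2 := by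
        rw [Aux.hinge_of_ge (by norm_num)]; norm_num
      have v2 : hinge ((1:ℝ) * (0 * (-1/3) + (-1) * 1 + 0)) = 2 := by
        rw [Aux.hinge_of_ge (by norm_num)]; norm_num
      have v3 : hinge ((-1:ℝ) * (0 * (2/3) + (-1) * (-h) + 0)) = 1 + h := by
        rw [show ((-1:ℝ) * (0 * (2/3) + (-1) * (-h) + 0)) = -h by ring,
          Aux.hinge_of_ge (by linarith)]
        ring
      rw [v1, v2, v3]
      have hexp : l * (1 + h) = l + (1 - l) := by linear_combination hlh
      linarith [hexp]
  -- θ*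
  · refine ⟨(pt 0 1, 0), ?_, ?_, ?_, ?_⟩
    · rw [Aux.norm_pt_0b]; norm_num
    all_goals {
      rw [lossH, Aux.tm_integral _ _ _ (by norm_num) hql hl0.le]
      simp only [hA0, hB0, hT0, hA1, hB1, hA2, hB2, hT2]
      rw [Aux.mval, Aux.mval, Aux.mval]
      rw [Aux.hinge_of_le (by norm_num), Aux.hinge_of_le (by norm_num),
        Aux.hinge_of_le (by norm_num; linarith)]
      ring
    }
end
end
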